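/- arXiv:1111.4541 — 4 statements merged into one kernel-verified Lean document; each statement's English description precedes it below -/
import Mathlib

section
/- The commute time is a metric on the nodes of a connected weighted graph: it is zero on the diagonal, symmetric, and satisfies the triangle inequality c(i,j) ≤ c(i,k) + c(k,j). -/
/-!
The survival probability `P_i(T_j > t)` decays geometrically when `j` is reachable from
everywhere, so the hitting time `h(i, j)` is its (finite) sum and satisfies the first-step
equations `h(i, j) = 1 + ∑ₗ p(i, l) h(l, j)` for `i ≠ j`. For fixed `j, k`, the function
`u x = h(x, k) + h(k, j) - h(x, j)` is therefore harmonic off `{j, k}`, and it is nonnegative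
there (`u k = 0`, `u j = h(j, k) + h(k, j)`). By the minimum principle `u ≥ 0`, which is the
triangle inequality for hitting times; adding it for `(i, j)` and `(j, i)` gives the one for
commute times.
-/

open Matrix BigOperators

/-- Probability that the random walk with transition probabilities `p`,
started at `i`, reaches `j` for the first time in exactly `t` steps. -/
noncomputable def hitProb {n : ℕ} (p : Fin n → Fin n → ℝ) : ℕ → Fin n → Fin n → ℝ
  | 0, i, j => if i = j then 1 else 0
  | t + 1, i, j => if i = j then 0 else ∑ l, p i l * hitProb p t l j

/-- Expected first-hitting time of `j` from `i`. -/
noncomputable def hittingTime {n : ℕ} (p : Fin n → Fin n → ℝ) (i j : Fin n) : ℝ :=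
  ∑' t : ℕ, (t : ℝ) * hitProb p t i j

open Finset Filter Relation Topology

theorem Antitone.tendsto_nat_mul_of_summable {f : ℕ → ℝ} (hf : Antitone f)
    (hs : Summable f) : Tendsto (fun N : ℕ => (N : ℝ) * f N) atTop (𝓝 0) := by
  have hf0 : ∀ N, 0 ≤ f N := fun N => not_lt.mp fun h => not_summable_of_antitone_of_neg hf h hs
  have hbound : ∀ N : ℕ,
      (N : ℝ) * f N ≤ 2 * (∑ t ∈ range N, f t - ∑ t ∈ range (N / 2), f t) := by
    intro N
    rw [← sum_Ico_eq_sub _ (Nat.div_le_self N 2)]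
    calc (N : ℝ) * f N ≤ 2 * ((N - N / 2 : ℕ) * f N) := by
          rw [← mul_assoc]
          exact mul_le_mul_of_nonneg_right (by norm_cast; omega) (hf0 N)
      _ ≤ 2 * ∑ t ∈ Ico (N / 2) N, f t := by
          rw [← Nat.card_Ico, ← nsmul_eq_mul]
          exact mul_le_mul_of_nonneg_left
            (card_nsmul_le_sum _ _ _ fun t ht => hf (mem_Ico.mp ht).2.le) two_pos.le
  have hsum := hs.hasSum.tendsto_sum_nat
  have hlim : Tendsto (fun N : ℕ => 2 * (∑ t ∈ range N, f t - ∑ t ∈ range (N / 2), f t))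
      atTop (𝓝 0) := by
    simpa using (hsum.sub (hsum.comp (Nat.tendsto_div_const_atTop two_ne_zero))).const_mul 2
  exact squeeze_zero (fun N => mul_nonneg N.cast_nonneg (hf0 N)) hbound hlim

section RandomWalk

variable {n : ℕ} {p : Fin n → Fin n → ℝ}

theorem hitProb_nonneg (hp0 : ∀ i l, 0 ≤ p i l) (t : ℕ) (i j : Fin n) :
    0 ≤ hitProb p t i j := by
  induction t generalizing i with
  | zero => unfold hitProb; positivity
  | succ t ih =>
    rw [hitProb]
    split_ifs
    exacts [le_rfl, sum_nonneg fun l _ => mul_nonneg (hp0 i l) (ih l)]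

theorem hittingTime_nonneg (hp0 : ∀ i l, 0 ≤ p i l) (i j : Fin n) : 0 ≤ hittingTime p i j :=
  tsum_nonneg fun t => mul_nonneg t.cast_nonneg (hitProb_nonneg hp0 t i j)

theorem hittingTime_self (p : Fin n → Fin n → ℝ) (j : Fin n) : hittingTime p j j = 0 := by
  have hterm : ∀ t : ℕ, (t : ℝ) * hitProb p t j j = 0 := by
    rintro (_ | t) <;> simp [hitProb]
  simp [hittingTime, hterm]

/-- `survProb p t i j` is the probability that the walk from `i` has not reached `j` by time
`t`. -/
noncomputable def survProb (p : Fin n → Fin n → ℝ) : ℕ → Fin n → Fin n → ℝ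
  | 0, i, j => if i = j then 0 else 1
  | t + 1, i, j => if i = j then 0 else ∑ l, p i l * survProb p t l j

theorem survProb_self (t : ℕ) (j : Fin n) : survProb p t j j = 0 := by
  cases t <;> simp [survProb]

theorem survProb_nonneg (hp0 : ∀ i l, 0 ≤ p i l) (t : ℕ) (i j : Fin n) :
    0 ≤ survProb p t i j := by
  induction t generalizing i with
  | zero => unfold survProb; positivity
  | succ t ih =>
    rw [survProb]
    split_ifs
    exacts [le_rfl, sum_nonneg fun l _ => mul_nonneg (hp0 i l) (ih l)]

theorem survProb_le_one (hp : p ∈ rowStochastic ℝ (Fin n)) (t : ℕ) (i j : Fin n) :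
    survProb p t i j ≤ 1 := by
  induction t generalizing i with
  | zero => unfold survProb; split_ifs <;> norm_num
  | succ t ih =>
    rw [survProb]
    split_ifs
    · exact zero_le_one
    · calc ∑ l, p i l * survProb p t l j ≤ ∑ l, p i l :=
            sum_le_sum fun l _ => mul_le_of_le_one_right (nonneg_of_mem_rowStochastic hp) (ih l)
        _ = 1 := sum_row_of_mem_rowStochastic hp i

theorem hitProb_succ_eq_survProb_sub (hp : p ∈ rowStochastic ℝ (Fin n)) (t : ℕ)
    (i j : Fin n) :
    hitProb p (t + 1) i j = survProb p t i j - survProb p (t + 1) i j := by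
  induction t generalizing i with
  | zero =>
    by_cases hij : i = j
    · simp [hitProb, survProb, hij]
    · rw [hitProb, survProb, survProb]
      simp only [if_neg hij]
      rw [← sum_row_of_mem_rowStochastic hp i, ← sum_sub_distrib]
      refine sum_congr rfl fun l _ => ?_
      simp only [hitProb, survProb]
      split_ifs <;> ring
  | succ t ih =>
    by_cases hij : i = j
    · simp [hitProb, survProb, hij]
    · rw [hitProb, survProb, survProb]
      simp only [if_neg hij]
      rw [← sum_sub_distrib]
      simp only [ih, mul_sub]

theorem survProb_antitone (hp : p ∈ rowStochastic ℝ (Fin n)) (i j : Fin n) :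
    Antitone fun t => survProb p t i j :=
  antitone_nat_of_succ_le fun t => by
    have := hitProb_nonneg hp.1 (t + 1) i j
    linarith [hitProb_succ_eq_survProb_sub hp t i j]

theorem sum_range_mul_hitProb (hp : p ∈ rowStochastic ℝ (Fin n)) (N : ℕ) (i j : Fin n) :
    ∑ t ∈ range (N + 1), (t : ℝ) * hitProb p t i j
      = ∑ t ∈ range N, survProb p t i j - N * survProb p N i j := by
  induction N with
  | zero => simp
  | succ N ih =>
    rw [sum_range_succ, ih, hitProb_succ_eq_survProb_sub hp, sum_range_succ]
    push_cast
    ring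

theorem exists_survProb_lt_one (hp : p ∈ rowStochastic ℝ (Fin n)) {l j : Fin n}
    (hlj : ReflTransGen (fun a b => 0 < p a b) l j) : ∃ t, survProb p t l j < 1 := by
  induction hlj using ReflTransGen.head_induction_on with
  | refl => exact ⟨0, by simp [survProb_self]⟩
  | @head a b hab _ ih =>
    obtain ⟨t, ht⟩ := ih
    refine ⟨t + 1, ?_⟩
    rw [survProb]
    split_ifs
    · exact zero_lt_one
    · calc ∑ l, p a l * survProb p t l j < ∑ l, p a l * 1 :=
            sum_lt_sum (fun l _ => mul_le_mul_of_nonneg_left (survProb_le_one hp t l j)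
              (nonneg_of_mem_rowStochastic hp)) ⟨b, mem_univ b, mul_lt_mul_of_pos_left ht hab⟩
        _ = 1 := by simp [sum_row_of_mem_rowStochastic hp a]

theorem exists_forall_survProb_lt_one (hp : p ∈ rowStochastic ℝ (Fin n)) {j : Fin n}
    (hj : ∀ l, ReflTransGen (fun a b => 0 < p a b) l j) :
    ∃ m, 0 < m ∧ ∀ l, survProb p m l j < 1 := by
  choose t ht using fun l => exists_survProb_lt_one hp (hj l)
  exact ⟨univ.sup t + 1, Nat.succ_pos _, fun l =>
    (survProb_antitone hp l j (Nat.le_succ_of_le (le_sup (mem_univ l)))).trans_lt (ht l)⟩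

theorem survProb_add_le_mul (hp : p ∈ rowStochastic ℝ (Fin n)) {m : ℕ} {j : Fin n} {B : ℝ}
    (hB : ∀ l, survProb p m l j ≤ B) (s : ℕ) (i : Fin n) :
    survProb p (m + s) i j ≤ B * survProb p s i j := by
  induction s generalizing i with
  | zero =>
    by_cases hij : i = j
    · simp [hij, survProb_self]
    · simpa [survProb, hij] using hB i
  | succ s ih =>
    rw [← add_assoc, survProb, survProb]
    split_ifs
    · simp
    · rw [mul_sum]
      exact sum_le_sum fun l _ => by
        rw [mul_left_comm]
        exact mul_le_mul_of_nonneg_left (ih l) (nonneg_of_mem_rowStochastic hp)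

theorem survProb_mul_le_pow (hp : p ∈ rowStochastic ℝ (Fin n)) {m : ℕ} {j : Fin n} {B : ℝ}
    (hB : ∀ l, survProb p m l j ≤ B) (q : ℕ) (i : Fin n) :
    survProb p (m * q) i j ≤ B ^ q := by
  have hB0 : 0 ≤ B := (survProb_nonneg hp.1 m i j).trans (hB i)
  induction q with
  | zero => simpa using survProb_le_one hp 0 i j
  | succ q ih =>
    calc survProb p (m * (q + 1)) i j = survProb p (m + m * q) i j := by ring_nf
      _ ≤ B * survProb p (m * q) i j := survProb_add_le_mul hp hB (m * q) i
      _ ≤ B * B ^ q := mul_le_mul_of_nonneg_left ih hB0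
      _ = B ^ (q + 1) := (pow_succ' B q).symm

theorem summable_survProb (hp : p ∈ rowStochastic ℝ (Fin n)) {j : Fin n}
    (hj : ∀ l, ReflTransGen (fun a b => 0 < p a b) l j) (i : Fin n) :
    Summable fun t => survProb p t i j := by
  obtain ⟨m, hm, hlt⟩ := exists_forall_survProb_lt_one hp hj
  have : Nonempty (Fin n) := ⟨i⟩
  obtain ⟨l₀, hl₀⟩ := Finite.exists_max fun l => survProb p m l j
  have : NeZero m := ⟨hm.ne'⟩
  rw [← summable_indicator_mod_iff (m := m) (survProb_antitone hp i j) 0, ← Nat.cast_zero,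
    summable_indicator_mod_iff_summable]
  exact (summable_geometric_of_lt_one (survProb_nonneg hp.1 m l₀ j) (hlt l₀)).of_nonneg_of_le
    (fun q => survProb_nonneg hp.1 _ i j)
    fun q => survProb_mul_le_pow hp hl₀ q i

theorem hittingTime_eq_tsum_survProb (hp : p ∈ rowStochastic ℝ (Fin n)) {j : Fin n}
    (hj : ∀ l, ReflTransGen (fun a b => 0 < p a b) l j) (i : Fin n) :
    hittingTime p i j = ∑' t, survProb p t i j := by
  have hsurv := summable_survProb hp hj i
  have hlim : Tendsto (fun N => ∑ t ∈ range (N + 1), (t : ℝ) * hitProb p t i j) atTop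
      (𝓝 (∑' t, survProb p t i j)) := by
    simp_rw [sum_range_mul_hitProb hp]
    simpa using hsurv.hasSum.tendsto_sum_nat.sub
      ((survProb_antitone hp i j).tendsto_nat_mul_of_summable hsurv)
  refine HasSum.tsum_eq ((hasSum_iff_tendsto_nat_of_nonneg (fun t => mul_nonneg t.cast_nonneg
    (hitProb_nonneg hp.1 t i j)) _).mpr ?_)
  exact (tendsto_add_atTop_iff_nat 1).mp hlim

theorem hittingTime_eq_one_add (hp : p ∈ rowStochastic ℝ (Fin n)) {i j : Fin n}
    (hj : ∀ l, ReflTransGen (fun a b => 0 < p a b) l j) (hij : i ≠ j) :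
    hittingTime p i j = 1 + ∑ l, p i l * hittingTime p l j := by
  have hstep : ∀ t, survProb p (t + 1) i j = ∑ l, p i l * survProb p t l j := fun t => by
    rw [survProb, if_neg hij]
  rw [hittingTime_eq_tsum_survProb hp hj, (summable_survProb hp hj i).tsum_eq_zero_add,
    survProb, if_neg hij, tsum_congr hstep,
    Summable.tsum_finsetSum fun l _ => (summable_survProb hp hj l).mul_left (p i l)]
  simp_rw [tsum_mul_left, hittingTime_eq_tsum_survProb hp hj]

theorem eq_of_harmonicAt_of_forall_le (hp : p ∈ rowStochastic ℝ (Fin n)) {u : Fin n → ℝ}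
    {a b : Fin n} (ha : u a = ∑ l, p a l * u l) (hmin : ∀ y, u a ≤ u y) (hab : 0 < p a b) :
    u b = u a := by
  have hsum : ∑ l, p a l * (u l - u a) = 0 := by
    simp only [mul_sub, sum_sub_distrib, ← sum_mul, sum_row_of_mem_rowStochastic hp a, ← ha]
    ring
  have hterm := (sum_eq_zero_iff_of_nonneg fun l _ => mul_nonneg
    (nonneg_of_mem_rowStochastic hp) (sub_nonneg.mpr (hmin l))).mp hsum b (mem_univ b)
  linarith [(mul_eq_zero.mp hterm).resolve_left hab.ne']

theorem exists_mem_le_of_harmonic (hp : p ∈ rowStochastic ℝ (Fin n)) {S : Set (Fin n)}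
    (hS : ∀ x, ∃ s ∈ S, ReflTransGen (fun a b => 0 < p a b) x s) {u : Fin n → ℝ}
    (hu : ∀ x ∉ S, u x = ∑ l, p x l * u l) (x : Fin n) : ∃ s ∈ S, u s ≤ u x := by
  have : Nonempty (Fin n) := ⟨x⟩
  obtain ⟨x₀, hx₀⟩ := Finite.exists_min u
  obtain ⟨s, hs, hx₀s⟩ := hS x₀
  suffices h : ∀ b, ReflTransGen (fun a b => 0 < p a b) x₀ b →
      (∃ s ∈ S, u s = u x₀) ∨ u b = u x₀ by
    obtain ⟨s', hs', heq⟩ | heq := h s hx₀s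
    exacts [⟨s', hs', heq ▸ hx₀ x⟩, ⟨s, hs, heq ▸ hx₀ x⟩]
  intro b hb
  induction hb with
  | refl => exact Or.inr rfl
  | @tail a b _ hab ih =>
    refine ih.elim Or.inl fun ha => ?_
    by_cases haS : a ∈ S
    · exact Or.inl ⟨a, haS, ha⟩
    · rw [← ha]
      exact Or.inr (eq_of_harmonicAt_of_forall_le hp (hu a haS) (fun y => ha ▸ hx₀ y) hab)

theorem hittingTime_triangle (hp : p ∈ rowStochastic ℝ (Fin n)) {j k : Fin n}
    (hj : ∀ l, ReflTransGen (fun a b => 0 < p a b) l j)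
    (hk : ∀ l, ReflTransGen (fun a b => 0 < p a b) l k) (i : Fin n) :
    hittingTime p i j ≤ hittingTime p i k + hittingTime p k j := by
  set u : Fin n → ℝ := fun x => hittingTime p x k + hittingTime p k j - hittingTime p x j
  have harmonic : ∀ x ∉ ({j, k} : Set (Fin n)), u x = ∑ l, p x l * u l := by
    intro x hx
    simp only [Set.mem_insert_iff, Set.mem_singleton_iff, not_or] at hx
    simp only [u, mul_sub, mul_add, sum_sub_distrib, sum_add_distrib, ← sum_mul,
      sum_row_of_mem_rowStochastic hp x, hittingTime_eq_one_add hp hj hx.1,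
      hittingTime_eq_one_add hp hk hx.2]
    ring
  obtain ⟨s, hs, hsi⟩ := exists_mem_le_of_harmonic hp
    (fun x => ⟨k, Set.mem_insert_of_mem j (Set.mem_singleton k), hk x⟩) harmonic i
  have hs0 : 0 ≤ u s := by
    rcases hs with rfl | rfl
    · simp only [u, hittingTime_self]
      linarith [hittingTime_nonneg hp.1 s k, hittingTime_nonneg hp.1 k s]
    · simp [u, hittingTime_self]
  linarith

end RandomWalk

section WeightedGraph

variable {ι : Type*} [Fintype ι] {w : ι → ι → ℝ}

theorem sum_pos_of_reflTransGen (hnonneg : ∀ i j, 0 ≤ w i j) {a b : ι}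
    (hab : ReflTransGen (fun a b => 0 < w a b) a b) (hne : a ≠ b) : 0 < ∑ l, w a l := by
  obtain ⟨c, hac, -⟩ := hab.cases_head.resolve_left hne
  exact hac.trans_le (single_le_sum (fun l _ => hnonneg a l) (mem_univ c))

theorem randomWalk_mem_rowStochastic [DecidableEq ι] (hnonneg : ∀ i j, 0 ≤ w i j)
    {d : ι → ℝ} (hd : ∀ i, d i = ∑ j, w i j) (hd_pos : ∀ i, 0 < d i)
    {p : ι → ι → ℝ} (hp : ∀ i l, p i l = w i l / d i) : p ∈ rowStochastic ℝ ι := by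
  refine mem_rowStochastic_iff_sum.mpr ⟨fun i l => ?_, fun i => ?_⟩
  · rw [hp]
    exact div_nonneg (hnonneg i l) (hd_pos i).le
  · simp_rw [hp, ← sum_div, ← hd, div_self (hd_pos i).ne']

end WeightedGraph

theorem commute_time_is_metric_general {n : ℕ} (w : Fin n → Fin n → ℝ)
    (hnonneg : ∀ i j, 0 ≤ w i j)
    (hconn : ∀ i j : Fin n, Relation.ReflTransGen (fun a b => 0 < w a b) i j)
    (d : Fin n → ℝ) (hd : ∀ i, d i = ∑ j, w i j)
    (p : Fin n → Fin n → ℝ) (hp : ∀ i l, p i l = w i l / d i)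
    (c : Fin n → Fin n → ℝ)
    (hc : ∀ i j, c i j = hittingTime p i j + hittingTime p j i) :
    (∀ i, c i i = 0) ∧ (∀ i j, c i j = c j i) ∧
      (∀ i j k, c i j ≤ c i k + c k j) := by
  refine ⟨fun i => by rw [hc, hittingTime_self, add_zero],
    fun i j => by rw [hc, hc j i, add_comm], fun i j k => ?_⟩
  rcases eq_or_ne i j with rfl | hij
  · have hp0 : ∀ a l, 0 ≤ p a l := fun a l => by
      rw [hp, hd]
      exact div_nonneg (hnonneg a l) (sum_nonneg fun l _ => hnonneg a l)
    rw [hc, hc, hc, hittingTime_self]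
    linarith [hittingTime_nonneg hp0 i k, hittingTime_nonneg hp0 k i]
  -- Once there are two nodes, connectivity gives every node a neighbour: no degree vanishes.
  have hd_pos : ∀ a, 0 < d a := fun a => by
    rw [hd]
    rcases ne_or_eq a i with hai | rfl
    exacts [sum_pos_of_reflTransGen hnonneg (hconn a i) hai,
      sum_pos_of_reflTransGen hnonneg (hconn a j) hij]
  have hP := randomWalk_mem_rowStochastic hnonneg hd hd_pos hp
  have hreach : ∀ a b, ReflTransGen (fun a b => 0 < p a b) a b := fun a b =>
    ReflTransGen.mono (fun x y hxy => by rw [hp]; exact div_pos hxy (hd_pos x)) _ _ (hconn a b)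
  rw [hc, hc, hc]
  linarith [hittingTime_triangle hP (hreach · j) (hreach · k) i,
    hittingTime_triangle hP (hreach · i) (hreach · k) j]

/-- The commute time `c i j = h i j + h j i` of the natural random walk on a
connected weighted graph is a metric on the nodes: zero on the diagonal,
symmetric, and satisfying the triangle inequality. -/
theorem commute_time_is_metric {n : ℕ} (w : Fin n → Fin n → ℝ)
    (hsymm : ∀ i j, w i j = w j i) (hnonneg : ∀ i j, 0 ≤ w i j)
    (hconn : ∀ i j : Fin n, Relation.ReflTransGen (fun a b => 0 < w a b) i j)
    (d : Fin n → ℝ) (hd : ∀ i, d i = ∑ j, w i j)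
    (p : Fin n → Fin n → ℝ) (hp : ∀ i l, p i l = w i l / d i)
    (c : Fin n → Fin n → ℝ)
    (hc : ∀ i j, c i j = hittingTime p i j + hittingTime p j i) :
    (∀ i, c i i = 0) ∧ (∀ i j, c i j = c j i) ∧
      (∀ i j k, c i j ≤ c i k + c k j) :=
  commute_time_is_metric_general w hnonneg hconn d hd p hp c hc
end

section
/- For a connected weighted graph, the map θ = √V_G · V S^{-1/2} (using the nonzero eigenpairs of the Laplacian) is a Euclidean embedding of the nodes in which the squared Euclidean distance between the rows corresponding to nodes i and j equals the commute time c(i,j). -/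
/-!
The Laplacian is `L = V diag(λ) Vᵀ` with `Vᵀ V = 1`, and `V diag(λ⁻¹) Vᵀ` (with `0⁻¹ = 0`, which
is exactly the pseudo-inverse on the zero eigenvalue) satisfies the four Penrose conditions, so by
uniqueness of the Moore–Penrose inverse it is `L⁺`. Its quadratic form at `e_i - e_j` is
`∑ₖ λₖ⁻¹ (V i k - V j k)²`, which after scaling by `V_G` is `∑ₖ (θ i k - θ j k)²`.
-/

open Matrix BigOperators

namespace Matrix

variable {m n R : Type*} [Fintype n]

/-- The Penrose conditions, with the transpose in the role of the conjugate transpose. -/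
structure IsMoorePenroseInverse [Fintype m] [CommSemiring R] (A : Matrix m n R)
    (B : Matrix n m R) : Prop where
  mul_mul_self : A * B * A = A
  mul_mul_self' : B * A * B = B
  isSymm_mul : (A * B).IsSymm
  isSymm_mul' : (B * A).IsSymm

theorem IsMoorePenroseInverse.unique [Fintype m] [CommSemiring R] {A : Matrix m n R}
    {B C : Matrix n m R} (hB : A.IsMoorePenroseInverse B) (hC : A.IsMoorePenroseInverse C) :
    B = C := by
  have hAB : A * B = A * C :=
    calc A * B = (A * C * A * B)ᵀ := by rw [hC.mul_mul_self, hB.isSymm_mul.eq]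
    _ = (A * B)ᵀ * (A * C)ᵀ := by rw [← Matrix.transpose_mul, Matrix.mul_assoc (A * C)]
    _ = A * C := by rw [hB.isSymm_mul.eq, hC.isSymm_mul.eq, ← Matrix.mul_assoc, hB.mul_mul_self]
  have hBA : B * A = C * A :=
    calc B * A = (B * (A * C * A))ᵀ := by rw [hC.mul_mul_self, hB.isSymm_mul'.eq]
    _ = (C * A)ᵀ * (B * A)ᵀ := by simp only [← Matrix.transpose_mul, Matrix.mul_assoc]
    _ = C * A := by
      rw [hB.isSymm_mul'.eq, hC.isSymm_mul'.eq, Matrix.mul_assoc, ← Matrix.mul_assoc A,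
        hB.mul_mul_self]
  calc B = B * A * B := hB.mul_mul_self'.symm
  _ = C * A * C := by rw [Matrix.mul_assoc, hAB, ← Matrix.mul_assoc, hBA]
  _ = C := hC.mul_mul_self'

variable [DecidableEq n]

theorem conj_diagonal_mul_conj_diagonal [Fintype m] [CommSemiring R] {V : Matrix m n R}
    (hV : Vᵀ * V = 1) (a b : n → R) :
    V * diagonal a * Vᵀ * (V * diagonal b * Vᵀ) = V * diagonal (a * b) * Vᵀ := by
  calc V * diagonal a * Vᵀ * (V * diagonal b * Vᵀ)
      = V * diagonal a * (Vᵀ * V) * diagonal b * Vᵀ := by simp only [Matrix.mul_assoc]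
  _ = V * diagonal (a * b) * Vᵀ := by
    rw [hV, Matrix.mul_one, Matrix.mul_assoc V, diagonal_mul_diagonal]; rfl

theorem isSymm_conj_diagonal [CommSemiring R] (V : Matrix m n R) (a : n → R) :
    (V * diagonal a * Vᵀ).IsSymm := by
  simp only [IsSymm, Matrix.transpose_mul, diagonal_transpose, transpose_transpose,
    Matrix.mul_assoc]

theorem isMoorePenroseInverse_conj_diagonal [Fintype m] [Field R] {V : Matrix m n R}
    (hV : Vᵀ * V = 1) (a : n → R) :
    (V * diagonal a * Vᵀ).IsMoorePenroseInverse (V * diagonal a⁻¹ * Vᵀ) where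
  mul_mul_self := by
    rw [conj_diagonal_mul_conj_diagonal hV, conj_diagonal_mul_conj_diagonal hV]
    congr; funext k; exact mul_inv_mul_cancel (a k)
  mul_mul_self' := by
    rw [conj_diagonal_mul_conj_diagonal hV, conj_diagonal_mul_conj_diagonal hV]
    congr; funext k; simpa using mul_inv_mul_cancel (a k)⁻¹
  isSymm_mul := by rw [conj_diagonal_mul_conj_diagonal hV]; exact isSymm_conj_diagonal V _
  isSymm_mul' := by rw [conj_diagonal_mul_conj_diagonal hV]; exact isSymm_conj_diagonal V _

theorem dotProduct_conj_diagonal_mulVec [Fintype m] [CommSemiring R] (V : Matrix m n R)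
    (a : n → R) (x : m → R) : x ⬝ᵥ (V * diagonal a * Vᵀ) *ᵥ x = ∑ k, a k * (x ᵥ* V) k ^ 2 := by
  rw [← mulVec_mulVec, ← mulVec_mulVec, dotProduct_mulVec, mulVec_transpose, dotProduct]
  congr 1; funext k
  rw [mulVec_diagonal]; ring

end Matrix

theorem commute_time_embedding_general {n : ℕ} [NeZero n]
    (L V S Lp : Matrix (Fin n) (Fin n) ℝ) (lam : Fin n → ℝ)
    (hS : S = Matrix.diagonal lam) (hL : L = V * S * Vᵀ)
    (hVorth' : Vᵀ * V = 1)
    (hlam0 : lam 0 = 0) (hlampos : ∀ i : Fin n, i ≠ 0 → 0 < lam i)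
    (hmp1 : L * Lp * L = L) (hmp2 : Lp * L * Lp = Lp)
    (hmp3 : (L * Lp)ᵀ = L * Lp) (hmp4 : (Lp * L)ᵀ = Lp * L)
    (VG : ℝ) (hVG : 0 < VG)
    (θ : Matrix (Fin n) (Fin n) ℝ)
    (hθ : ∀ r k, θ r k = Real.sqrt VG * V r k * (Real.sqrt (lam k))⁻¹) :
    ∀ i j, VG * ((Pi.single i 1 - Pi.single j 1) ⬝ᵥ
        (Lp *ᵥ (Pi.single i 1 - Pi.single j 1))) =
      ∑ k, (θ i k - θ j k) ^ 2 := by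
  have hlam_nonneg (k : Fin n) : 0 ≤ lam k := by
    rcases eq_or_ne k 0 with rfl | hk
    · exact hlam0.ge
    · exact (hlampos k hk).le
  subst hS hL
  have hLp : Lp = V * diagonal lam⁻¹ * Vᵀ :=
    IsMoorePenroseInverse.unique ⟨hmp1, hmp2, hmp3, hmp4⟩
      (isMoorePenroseInverse_conj_diagonal hVorth' lam)
  intro i j
  rw [hLp, dotProduct_conj_diagonal_mulVec, Finset.mul_sum]
  refine Finset.sum_congr rfl fun k _ => ?_
  rw [hθ, hθ, ← sub_mul, ← mul_sub, mul_pow, mul_pow, Real.sq_sqrt hVG.le, inv_pow,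
    Real.sq_sqrt (hlam_nonneg k), sub_vecMul, Pi.sub_apply, single_one_vecMul,
    single_one_vecMul, Pi.inv_apply, row_apply, row_apply]
  ring

/-- For a connected graph with Laplacian spectral decomposition `L = V S Vᵀ`
(with `λ_0 = 0` and all other eigenvalues positive), the map
`θ = √V_G · V S^{-1/2}` (pseudo-inverse square root on the nonzero eigenvalues)
is a Euclidean embedding of the nodes in which the squared Euclidean distance
between rows `i` and `j` equals the commute time
`c i j = V_G (e_i - e_j)ᵀ L⁺ (e_i - e_j)`. -/
theorem commute_time_embedding {n : ℕ} [NeZero n]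
    (L V S Lp : Matrix (Fin n) (Fin n) ℝ) (lam : Fin n → ℝ)
    (hS : S = Matrix.diagonal lam) (hL : L = V * S * Vᵀ)
    (hVorth : V * Vᵀ = 1) (hVorth' : Vᵀ * V = 1)
    (hlam0 : lam 0 = 0) (hlampos : ∀ i : Fin n, i ≠ 0 → 0 < lam i)
    (hmp1 : L * Lp * L = L) (hmp2 : Lp * L * Lp = Lp)
    (hmp3 : (L * Lp)ᵀ = L * Lp) (hmp4 : (Lp * L)ᵀ = Lp * L)
    (VG : ℝ) (hVG : 0 < VG)
    (θ : Matrix (Fin n) (Fin n) ℝ)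
    (hθ : ∀ r k, θ r k = Real.sqrt VG * V r k * (Real.sqrt (lam k))⁻¹) :
    ∀ i j, VG * ((Pi.single i 1 - Pi.single j 1) ⬝ᵥ
        (Lp *ᵥ (Pi.single i 1 - Pi.single j 1))) =
      ∑ k, (θ i k - θ j k) ^ 2 :=
  commute_time_embedding_general L V S Lp lam hS hL hVorth' hlam0 hlampos hmp1 hmp2 hmp3 hmp4 VG hVG
    θ hθ
end

section
/- For a connected weighted graph, the rows of the matrix θ = √V_G · L^+ B^T W^{1/2} ∈ ℝ^{n×m} give a Euclidean embedding of the nodes in which the squared Euclidean distance between rows i and j equals the commute time: c(i,j) = ||θ^T(e_i - e_j)||². -/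
open Matrix BigOperators

/-! The Laplacian `L = Bᵀ W B` is symmetric, hence so is its Moore–Penrose inverse: `L⁺ᵀ`
satisfies the Penrose equations of `Lᵀ = L`, and these determine the inverse uniquely. Therefore
`θ θᵀ = V_G L⁺ Bᵀ W B L⁺ᵀ = V_G L⁺ L L⁺ = V_G L⁺`, and the quadratic form of `θ θᵀ` at
`e_i - e_j` is the squared norm of `θᵀ (e_i - e_j)`, whose entries are `θ i e - θ j e`. -/

namespace Matrix

section MoorePenrose

variable {m n R : Type*} [Fintype m] [Fintype n] [CommSemiring R]

/-- The Penrose equations with the transpose in place of the adjoint, which is the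
Moore–Penrose inverse over `ℝ`. -/
structure IsMoorePenroseInverse_s6 (A : Matrix m n R) (X : Matrix n m R) : Prop where
  mul_inv_mul : A * X * A = A
  inv_mul_inv : X * A * X = X
  isSymm_mul_inv : (A * X).IsSymm
  isSymm_inv_mul : (X * A).IsSymm

namespace IsMoorePenroseInverse_s6

variable {A : Matrix m n R} {X Y : Matrix n m R}

theorem transpose (h : IsMoorePenroseInverse_s6 A X) : IsMoorePenroseInverse_s6 Aᵀ Xᵀ where
  mul_inv_mul := by rw [← transpose_mul, ← transpose_mul, ← Matrix.mul_assoc, h.mul_inv_mul]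
  inv_mul_inv := by rw [← transpose_mul, ← transpose_mul, ← Matrix.mul_assoc, h.inv_mul_inv]
  isSymm_mul_inv := by rw [← transpose_mul, h.isSymm_inv_mul.eq]; exact h.isSymm_inv_mul
  isSymm_inv_mul := by rw [← transpose_mul, h.isSymm_mul_inv.eq]; exact h.isSymm_mul_inv

theorem mul_inv_eq (hX : IsMoorePenroseInverse_s6 A X) (hY : IsMoorePenroseInverse_s6 A Y) :
    A * X = A * Y :=
  calc A * X = Xᵀ * (A * Y * A)ᵀ := by
        rw [hY.mul_inv_mul, ← transpose_mul, hX.isSymm_mul_inv.eq]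
    _ = (A * X)ᵀ * (A * Y)ᵀ := by simp only [transpose_mul, Matrix.mul_assoc]
    _ = A * X * A * Y := by
      rw [hX.isSymm_mul_inv.eq, hY.isSymm_mul_inv.eq]; simp only [Matrix.mul_assoc]
    _ = A * Y := by rw [hX.mul_inv_mul]

theorem inv_mul_eq (hX : IsMoorePenroseInverse_s6 A X) (hY : IsMoorePenroseInverse_s6 A Y) :
    X * A = Y * A := by
  simpa only [← transpose_mul, transpose_transpose] using
    congrArg Matrix.transpose (hX.transpose.mul_inv_eq hY.transpose)

theorem unique_s6 (hX : IsMoorePenroseInverse_s6 A X) (hY : IsMoorePenroseInverse_s6 A Y) : X = Y :=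
  calc X = X * A * X := hX.inv_mul_inv.symm
    _ = Y * A * Y := by
      rw [Matrix.mul_assoc, hX.mul_inv_eq hY, ← Matrix.mul_assoc, hX.inv_mul_eq hY]
    _ = Y := hY.inv_mul_inv

theorem isSymm {A X : Matrix n n R} (hA : A.IsSymm) (h : IsMoorePenroseInverse_s6 A X) :
    X.IsSymm := by
  have hXt := h.transpose
  rw [hA.eq] at hXt
  exact hXt.unique_s6 h

end IsMoorePenroseInverse_s6

end MoorePenrose

theorem isSymm_transpose_mul_diagonal_mul {m n R : Type*} [Fintype m] [DecidableEq m]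
    [Fintype n] [CommSemiring R] (B : Matrix m n R) (w : m → R) :
    (Bᵀ * diagonal w * B).IsSymm := by
  simp only [IsSymm, transpose_mul, diagonal_transpose, transpose_transpose, Matrix.mul_assoc]

theorem dotProduct_mul_transpose_mulVec {m n R : Type*} [Fintype m] [Fintype n]
    [CommSemiring R] (M : Matrix n m R) (x : n → R) :
    x ⬝ᵥ (M * Mᵀ) *ᵥ x = (Mᵀ *ᵥ x) ⬝ᵥ (Mᵀ *ᵥ x) := by
  rw [← mulVec_mulVec, dotProduct_mulVec, ← mulVec_transpose]

theorem transpose_mulVec_single_sub_single {m n R : Type*} [Fintype n] [DecidableEq n]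
    [Ring R] (M : Matrix n m R) (i j : n) :
    Mᵀ *ᵥ (Pi.single i 1 - Pi.single j 1) = M i - M j := by
  rw [mulVec_sub, mulVec_single_one, mulVec_single_one]
  rfl

theorem mul_diagonal_sqrt_mul_transpose {m n : Type*} [Fintype m] [DecidableEq m]
    (M : Matrix n m ℝ) {w : m → ℝ} (hw : ∀ e, 0 ≤ w e) :
    M * diagonal (fun e => √(w e)) * (M * diagonal (fun e => √(w e)))ᵀ
      = M * diagonal w * Mᵀ := by
  rw [transpose_mul, diagonal_transpose, Matrix.mul_assoc, ← Matrix.mul_assoc (diagonal _),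
    diagonal_mul_diagonal, ← Matrix.mul_assoc]
  simp only [Real.mul_self_sqrt (hw _)]

end Matrix

theorem commute_time_embedding_incidence_general {n m : ℕ}
    (wt : Fin m → ℝ) (hwt : ∀ e, 0 < wt e)
    (B : Matrix (Fin m) (Fin n) ℝ)
    (W : Matrix (Fin m) (Fin m) ℝ) (hW : W = Matrix.diagonal wt)
    (L : Matrix (Fin n) (Fin n) ℝ) (hL : L = Bᵀ * W * B)
    (Lp : Matrix (Fin n) (Fin n) ℝ)
    (hmp1 : L * Lp * L = L) (hmp2 : Lp * L * Lp = Lp)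
    (hmp3 : (L * Lp)ᵀ = L * Lp) (hmp4 : (Lp * L)ᵀ = Lp * L)
    (VG : ℝ) (hVG : 0 < VG)
    (θ : Matrix (Fin n) (Fin m) ℝ)
    (hθ : θ = Real.sqrt VG • (Lp * Bᵀ * Matrix.diagonal (fun e => Real.sqrt (wt e)))) :
    ∀ i j, VG * ((Pi.single i 1 - Pi.single j 1) ⬝ᵥ
        (Lp *ᵥ (Pi.single i 1 - Pi.single j 1))) =
      ∑ e, (θ i e - θ j e) ^ 2 := by
  intro i j
  have hLp : Lp.IsSymm :=
    (⟨hmp1, hmp2, hmp3, hmp4⟩ : IsMoorePenroseInverse_s6 L Lp).isSymm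
      (hL ▸ hW ▸ isSymm_transpose_mul_diagonal_mul B wt)
  have hgram : θ * θᵀ = VG • Lp := by
    rw [hθ, transpose_smul, Matrix.smul_mul, Matrix.mul_smul, smul_smul, Real.mul_self_sqrt hVG.le,
      mul_diagonal_sqrt_mul_transpose _ fun e => (hwt e).le, ← hW, transpose_mul, hLp.eq,
      transpose_transpose,
      show Lp * Bᵀ * W * (B * Lp) = Lp * (Bᵀ * W * B) * Lp by simp only [Matrix.mul_assoc],
      ← hL, hmp2]
  set x : Fin n → ℝ := Pi.single i 1 - Pi.single j 1 with hx
  calc VG * (x ⬝ᵥ Lp *ᵥ x) = x ⬝ᵥ (θ * θᵀ) *ᵥ x := by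
        rw [hgram, smul_mulVec, dotProduct_smul, smul_eq_mul]
    _ = ∑ e, (θ i e - θ j e) ^ 2 := by
        rw [dotProduct_mul_transpose_mulVec, hx, transpose_mulVec_single_sub_single]
        simp only [dotProduct, Pi.sub_apply, sq]

/-- For a connected weighted graph with incidence matrix `B`, diagonal
edge-weight matrix `W`, Laplacian `L = Bᵀ W B` with pseudoinverse `L⁺`, and
volume `V_G`, the rows of `θ = √V_G · L⁺ Bᵀ W^{1/2} ∈ ℝ^{n×m}` give a
Euclidean embedding of the nodes whose squared Euclidean distances are the
commute times: `c i j = ‖θᵀ (e_i - e_j)‖²`. -/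
theorem commute_time_embedding_incidence {n m : ℕ}
    (wt : Fin m → ℝ) (hwt : ∀ e, 0 < wt e)
    (B : Matrix (Fin m) (Fin n) ℝ)
    (hconn : ∀ i j : Fin n,
      Relation.ReflTransGen (fun a b => ∃ e, B e a ≠ 0 ∧ B e b ≠ 0) i j)
    (W : Matrix (Fin m) (Fin m) ℝ) (hW : W = Matrix.diagonal wt)
    (L : Matrix (Fin n) (Fin n) ℝ) (hL : L = Bᵀ * W * B)
    (Lp : Matrix (Fin n) (Fin n) ℝ)
    (hmp1 : L * Lp * L = L) (hmp2 : Lp * L * Lp = Lp)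
    (hmp3 : (L * Lp)ᵀ = L * Lp) (hmp4 : (Lp * L)ᵀ = Lp * L)
    (VG : ℝ) (hVG : 0 < VG)
    (θ : Matrix (Fin n) (Fin m) ℝ)
    (hθ : θ = Real.sqrt VG • (Lp * Bᵀ * Matrix.diagonal (fun e => Real.sqrt (wt e)))) :
    ∀ i j, VG * ((Pi.single i 1 - Pi.single j 1) ⬝ᵥ
        (Lp *ᵥ (Pi.single i 1 - Pi.single j 1))) =
      ∑ e, (θ i e - θ j e) ^ 2 :=
  commute_time_embedding_incidence_general wt hwt B W hW L hL Lp hmp1 hmp2 hmp3 hmp4 VG hVG θ hθ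
end

section
/- For a connected weighted graph with normalized Laplacian L_n = D^{-1/2} L D^{-1/2} having spectral decomposition L_n = V_n S_n V_n^T, the map θ_n = √V_G · D^{-1/2} V_n S_n^{-1/2} (pseudo-inverse square root on nonzero eigenvalues) embeds nodes so that squared Euclidean distances between rows equal commute times: c(i,j) = ||(θ_n)_i - (θ_n)_j||². -/
open Matrix BigOperators

/-- For a connected weighted graph with normalized Laplacian
`L_n = D^{-1/2} L D^{-1/2} = V_n S_n V_nᵀ`, the map
`θ_n = √V_G · D^{-1/2} V_n S_n^{-1/2}` (pseudo-inverse square root on the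
nonzero eigenvalues) embeds the nodes so that the squared Euclidean distance
between rows `i` and `j` equals the commute time
`c i j = V_G (e_i - e_j)ᵀ L⁺ (e_i - e_j)`. -/
theorem normalized_commute_time_embedding {n : ℕ} [NeZero n]
    (w : Fin n → Fin n → ℝ)
    (hsymm : ∀ i j, w i j = w j i) (hnonneg : ∀ i j, 0 ≤ w i j)
    (hconn : ∀ i j : Fin n, Relation.ReflTransGen (fun a b => 0 < w a b) i j)
    (d : Fin n → ℝ) (hd : ∀ i, d i = ∑ j, w i j) (hdpos : ∀ i, 0 < d i)
    (L : Matrix (Fin n) (Fin n) ℝ)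
    (hL : L = Matrix.diagonal d - Matrix.of w)
    (Dinvhalf : Matrix (Fin n) (Fin n) ℝ)
    (hDinvhalf : Dinvhalf = Matrix.diagonal (fun i => (Real.sqrt (d i))⁻¹))
    (Ln : Matrix (Fin n) (Fin n) ℝ) (hLn : Ln = Dinvhalf * L * Dinvhalf)
    (Vn : Matrix (Fin n) (Fin n) ℝ) (mu : Fin n → ℝ)
    (hVorth : Vn * Vnᵀ = 1) (hVorth' : Vnᵀ * Vn = 1)
    (hLnspec : Ln = Vn * Matrix.diagonal mu * Vnᵀ)
    (hmu0 : mu 0 = 0) (hmupos : ∀ k : Fin n, k ≠ 0 → 0 < mu k)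
    (Lp : Matrix (Fin n) (Fin n) ℝ)
    (hmp1 : L * Lp * L = L) (hmp2 : Lp * L * Lp = Lp)
    (hmp3 : (L * Lp)ᵀ = L * Lp) (hmp4 : (Lp * L)ᵀ = Lp * L)
    (VG : ℝ) (hVG : VG = ∑ i, d i)
    (θn : Matrix (Fin n) (Fin n) ℝ)
    (hθn : ∀ r k, θn r k =
      Real.sqrt VG * (Real.sqrt (d r))⁻¹ * Vn r k * (Real.sqrt (mu k))⁻¹) :
    ∀ i j, VG * ((Pi.single i 1 - Pi.single j 1) ⬝ᵥ
        (Lp *ᵥ (Pi.single i 1 - Pi.single j 1))) =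
      ∑ k, (θn i k - θn j k) ^ 2 := by
  -- basic facts
  have hLsym : Lᵀ = L := by
    rw [hL, transpose_sub, diagonal_transpose]
    congr 1
    ext a b
    simp [hsymm a b]
  have hL1 : L *ᵥ (fun _ => (1 : ℝ)) = 0 := by
    funext a
    rw [hL]
    simp only [mulVec, dotProduct, Matrix.sub_apply, Matrix.diagonal_apply,
      Matrix.of_apply, mul_one, Pi.zero_apply]
    rw [Finset.sum_sub_distrib]
    simp [hd a]
  -- kernel of L consists of constant vectors
  have hker : ∀ v : Fin n → ℝ, L *ᵥ v = 0 → ∀ a b : Fin n, v a = v b := by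
    intro v hv
    have hq : v ⬝ᵥ (L *ᵥ v) = 0 := by rw [hv]; simp
    have h2 : v ⬝ᵥ (L *ᵥ v)
        = ∑ a, ∑ b, (w a b * (v a) ^ 2 - w a b * (v a * v b)) := by
      rw [hL]
      simp only [dotProduct]
      refine Finset.sum_congr rfl fun a _ => ?_
      have hrow : ((Matrix.diagonal d - Matrix.of w) *ᵥ v) a
          = d a * v a - ∑ b, w a b * v b := by
        simp only [mulVec, dotProduct, Matrix.sub_apply, Matrix.diagonal_apply,
          Matrix.of_apply, sub_mul, ite_mul, zero_mul, Finset.sum_sub_distrib,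
          Finset.sum_ite_eq, Finset.mem_univ, if_true]
      rw [hrow, hd a, Finset.sum_mul, ← Finset.sum_sub_distrib, Finset.mul_sum]
      exact Finset.sum_congr rfl fun b _ => by ring
    have h1 : ∑ a, ∑ b, w a b * (v b) ^ 2 = ∑ a, ∑ b, w a b * (v a) ^ 2 := by
      rw [Finset.sum_comm]
      exact Finset.sum_congr rfl fun a _ => Finset.sum_congr rfl fun b _ => by
        rw [hsymm]
    have hexp : ∑ a, ∑ b, w a b * (v a - v b) ^ 2 = 2 * (v ⬝ᵥ (L *ᵥ v)) := by
      rw [h2]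
      have e : ∀ a b : Fin n, w a b * (v a - v b) ^ 2
          = w a b * (v a) ^ 2 + w a b * (v b) ^ 2
            - 2 * (w a b * (v a * v b)) := fun a b => by ring
      simp only [e, Finset.sum_sub_distrib, Finset.sum_add_distrib,
        ← Finset.mul_sum]
      rw [h1]
      ring
    have hz : ∑ a, ∑ b, w a b * (v a - v b) ^ 2 = 0 := by rw [hexp, hq]; ring
    have hterm : ∀ a b : Fin n, w a b * (v a - v b) ^ 2 = 0 := by
      have h := (Finset.sum_eq_zero_iff_of_nonneg (fun a _ =>
        Finset.sum_nonneg fun b _ =>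
          mul_nonneg (hnonneg a b) (sq_nonneg _))).mp hz
      intro a b
      have h2' := (Finset.sum_eq_zero_iff_of_nonneg (fun b _ =>
        mul_nonneg (hnonneg a b) (sq_nonneg _))).mp (h a (Finset.mem_univ a))
      exact h2' b (Finset.mem_univ b)
    have hstep : ∀ a b : Fin n, 0 < w a b → v a = v b := by
      intro a b hab
      rcases mul_eq_zero.mp (hterm a b) with h | h
      · exact absurd h (ne_of_gt hab)
      · have := pow_eq_zero_iff (n := 2) (by norm_num) |>.mp h
        linarith [sub_eq_zero.mp this]
    intro a b
    induction hconn a b with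
    | refl => rfl
    | tail _ hbc ih => exact ih.trans (hstep _ _ hbc)
  intro i j
  set x : Fin n → ℝ := Pi.single i 1 - Pi.single j 1 with hx
  -- x lies in the range of L
  have hLP : L * (L * Lp) = L := by
    have h := congrArg transpose hmp1
    rwa [transpose_mul, hmp3, hLsym] at h
  have hP1 : (L * Lp) *ᵥ (fun _ => (1 : ℝ)) = 0 := by
    rw [← hmp3, transpose_mul, hLsym, ← mulVec_mulVec, hL1]
    simp
  have hsumx : ∑ a, x a = 0 := by
    simp [hx, Finset.sum_sub_distrib, Finset.sum_pi_single]
  have hsumPx : ∑ a, ((L * Lp) *ᵥ x) a = 0 := by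
    have h : ∑ a, ((L * Lp) *ᵥ x) a = (fun _ => (1:ℝ)) ⬝ᵥ ((L * Lp) *ᵥ x) := by
      simp [dotProduct]
    rw [h, dotProduct_mulVec, ← mulVec_transpose, hmp3, hP1]
    simp
  obtain ⟨y, hy⟩ : ∃ y, L *ᵥ y = x := by
    refine ⟨Lp *ᵥ x, ?_⟩
    set u : Fin n → ℝ := fun a => x a - ((L * Lp) *ᵥ x) a with hu
    have hLu : L *ᵥ u = 0 := by
      have h : u = x - (L * Lp) *ᵥ x := rfl
      rw [h, mulVec_sub, mulVec_mulVec, hLP, sub_self]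
    have hconst := hker u hLu
    have hsumu : ∑ a, u a = 0 := by
      simp only [hu, Finset.sum_sub_distrib, hsumx, hsumPx, sub_zero]
    have hu0 : ∀ a, u a = 0 := by
      intro a
      have h : ∑ b, u b = ∑ _b : Fin n, u a :=
        Finset.sum_congr rfl fun b _ => hconst b a
      rw [hsumu, Finset.sum_const, Finset.card_univ, Fintype.card_fin,
        nsmul_eq_mul] at h
      have hn : (n : ℝ) ≠ 0 := Nat.cast_ne_zero.mpr (NeZero.ne n)
      exact ((mul_eq_zero.mp h.symm).resolve_left hn)
    funext a
    have := hu0 a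
    rw [mulVec_mulVec]
    simp only [hu] at this
    linarith
  -- quadratic forms of g-inverses agree on x
  have hquad : ∀ A : Matrix (Fin n) (Fin n) ℝ, L * A * L = L →
      x ⬝ᵥ (A *ᵥ x) = y ⬝ᵥ (L *ᵥ y) := by
    intro A hA
    have key : ∀ z, y ⬝ᵥ (L *ᵥ z) = (L *ᵥ y) ⬝ᵥ z := by
      intro z
      rw [dotProduct_mulVec, ← mulVec_transpose, hLsym]
    calc x ⬝ᵥ (A *ᵥ x) = (L *ᵥ y) ⬝ᵥ ((A * L) *ᵥ y) := by
          rw [← hy, mulVec_mulVec]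
      _ = y ⬝ᵥ (L *ᵥ ((A * L) *ᵥ y)) := (key _).symm
      _ = y ⬝ᵥ ((L * A * L) *ᵥ y) := by rw [mulVec_mulVec, Matrix.mul_assoc]
      _ = y ⬝ᵥ (L *ᵥ y) := by rw [hA]
  -- the candidate pseudoinverse M = Dinvhalf * Lnp * Dinvhalf is a g-inverse
  set Dhalf : Matrix (Fin n) (Fin n) ℝ :=
    Matrix.diagonal (fun i => Real.sqrt (d i)) with hDhalf
  have hsd : ∀ a, Real.sqrt (d a) ≠ 0 :=
    fun a => ne_of_gt (Real.sqrt_pos.mpr (hdpos a))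
  have hDD : Dhalf * Dinvhalf = 1 := by
    rw [hDhalf, hDinvhalf, diagonal_mul_diagonal]
    have e : (fun a => Real.sqrt (d a) * (Real.sqrt (d a))⁻¹)
        = fun _ : Fin n => (1:ℝ) := funext fun a => mul_inv_cancel₀ (hsd a)
    rw [e, diagonal_one]
  have hDD' : Dinvhalf * Dhalf = 1 := by
    rw [hDhalf, hDinvhalf, diagonal_mul_diagonal]
    have e : (fun a => (Real.sqrt (d a))⁻¹ * Real.sqrt (d a))
        = fun _ : Fin n => (1:ℝ) := funext fun a => inv_mul_cancel₀ (hsd a)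
    rw [e, diagonal_one]
  have cD : ∀ Z : Matrix (Fin n) (Fin n) ℝ, Dhalf * (Dinvhalf * Z) = Z :=
    fun Z => by rw [← Matrix.mul_assoc, hDD, Matrix.one_mul]
  have cD' : ∀ Z : Matrix (Fin n) (Fin n) ℝ, Dinvhalf * (Dhalf * Z) = Z :=
    fun Z => by rw [← Matrix.mul_assoc, hDD', Matrix.one_mul]
  have hLfact : L = Dhalf * Ln * Dhalf := by
    rw [hLn]
    simp only [Matrix.mul_assoc]
    rw [hDD', Matrix.mul_one, cD]
  have cV : ∀ Z : Matrix (Fin n) (Fin n) ℝ, Vnᵀ * (Vn * Z) = Z :=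
    fun Z => by rw [← Matrix.mul_assoc, hVorth', Matrix.one_mul]
  set g : Fin n → ℝ := fun k => (mu k)⁻¹ with hg
  set Lnp : Matrix (Fin n) (Fin n) ℝ := Vn * Matrix.diagonal g * Vnᵀ with hLnp
  have hgmu : Matrix.diagonal mu * Matrix.diagonal g * Matrix.diagonal mu
      = Matrix.diagonal mu := by
    rw [diagonal_mul_diagonal, diagonal_mul_diagonal]
    congr 1; funext k
    by_cases hk : mu k = 0
    · simp [hg, hk]
    · field_simp [hg]
      simp [hg, hk]
  have hgmu' : ∀ Z : Matrix (Fin n) (Fin n) ℝ,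
      Matrix.diagonal mu * (Matrix.diagonal g * (Matrix.diagonal mu * Z))
        = Matrix.diagonal mu * Z := by
    intro Z
    rw [← Matrix.mul_assoc, ← Matrix.mul_assoc, hgmu]
  have hLnLnpLn : Ln * Lnp * Ln = Ln := by
    rw [hLnspec, hLnp]
    simp only [Matrix.mul_assoc]
    simp only [cV]
    simp only [hgmu']
  set M : Matrix (Fin n) (Fin n) ℝ := Dinvhalf * Lnp * Dinvhalf with hM
  have hLML : L * M * L = L := by
    rw [hLfact, hM]
    simp only [Matrix.mul_assoc]
    simp only [cD, cD']
    have h5 : Ln * (Lnp * (Ln * Dhalf)) = Ln * Dhalf := by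
      simp only [← Matrix.mul_assoc]
      rw [hLnLnpLn]
    rw [h5]
  -- explicit computation of the quadratic form of M
  set B : Matrix (Fin n) (Fin n) ℝ := Vnᵀ * Dinvhalf with hB
  have hDsym : Dinvhalfᵀ = Dinvhalf := by rw [hDinvhalf, diagonal_transpose]
  have hBx : ∀ k, (B *ᵥ x) k
      = Vn i k * (Real.sqrt (d i))⁻¹ - Vn j k * (Real.sqrt (d j))⁻¹ := by
    intro k
    rw [hx, mulVec_sub]
    simp only [Pi.sub_apply, mulVec_single_one, mul_one, hB, hDinvhalf,
      Matrix.mul_diagonal, Matrix.transpose_apply, Matrix.col_apply]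
  have hMx : x ⬝ᵥ (M *ᵥ x) = ∑ k, g k * ((B *ᵥ x) k) ^ 2 := by
    have hMB : M = Bᵀ * (Matrix.diagonal g * B) := by
      rw [hM, hLnp, hB, transpose_mul, hDsym, transpose_transpose]
      simp only [Matrix.mul_assoc]
    have h1 : (Bᵀ * (Matrix.diagonal g * B)) *ᵥ x
        = Bᵀ *ᵥ ((Matrix.diagonal g) *ᵥ (B *ᵥ x)) := by
      rw [mulVec_mulVec, mulVec_mulVec, Matrix.mul_assoc]
    rw [hMB, h1, dotProduct_mulVec, vecMul_transpose]
    simp only [dotProduct, mulVec_diagonal]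
    exact Finset.sum_congr rfl fun k _ => by ring
  -- the right-hand side
  have hVGnn : 0 ≤ VG := by
    rw [hVG]; exact Finset.sum_nonneg fun a _ => (hdpos a).le
  have hRHS : ∑ k, (θn i k - θn j k) ^ 2 = VG * ∑ k, g k * ((B *ᵥ x) k) ^ 2 := by
    rw [Finset.mul_sum]
    refine Finset.sum_congr rfl fun k _ => ?_
    rw [hθn, hθn, hBx]
    have hmunn : 0 ≤ mu k := by
      rcases eq_or_ne k 0 with h | h
      · rw [h, hmu0]
      · exact (hmupos k h).le
    have h1 : Real.sqrt VG ^ 2 = VG := Real.sq_sqrt hVGnn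
    have h2 : ((Real.sqrt (mu k))⁻¹) ^ 2 = g k := by
      rw [inv_pow, Real.sq_sqrt hmunn, hg]
    calc (Real.sqrt VG * (Real.sqrt (d i))⁻¹ * Vn i k * (Real.sqrt (mu k))⁻¹
          - Real.sqrt VG * (Real.sqrt (d j))⁻¹ * Vn j k * (Real.sqrt (mu k))⁻¹) ^ 2
        = Real.sqrt VG ^ 2 * (((Real.sqrt (mu k))⁻¹) ^ 2
            * (Vn i k * (Real.sqrt (d i))⁻¹ - Vn j k * (Real.sqrt (d j))⁻¹) ^ 2) := by
          ring
      _ = VG * (g k * (Vn i k * (Real.sqrt (d i))⁻¹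
            - Vn j k * (Real.sqrt (d j))⁻¹) ^ 2) := by rw [h1, h2]
  -- assemble
  calc VG * (x ⬝ᵥ (Lp *ᵥ x))
      = VG * (x ⬝ᵥ (M *ᵥ x)) := by rw [hquad Lp hmp1, hquad M hLML]
    _ = VG * ∑ k, g k * ((B *ᵥ x) k) ^ 2 := by rw [hMx]
    _ = ∑ k, (θn i k - θn j k) ^ 2 := hRHS.symm
end
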